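/- arXiv:2012.02893 — 6 statements merged into one kernel-verified Lean document; each statement's English description precedes it below -/
import Mathlib

section
/- Let (A, P) be a single-agent mechanism that is truthful for quasi-linear buyers. Let the buyer have true valuation v ∈ V with v(x) ≤ 1 for all x ∈ X, and a cost-of-money function C : [0,∞) → [0,∞) that is convex, strictly increasing, continuously differentiable, with C(0) = 0 and C′(p) ≥ 1 for all p; the buyer's utility from bid b ∈ V is U(b) = v(A(b)) − C(P(b)). Assume the maps α ↦ v(A(α·v)) and α ↦ P(α·v) are continuous on [0,∞) and that α ↦ P(α·v) is strictly increasing on [0,1]. Then there exists α ∈ (0,1] such that the bid α·v maximizes U over all b ∈ V and α·C′(P(α·v)) = 1 (i.e., α is ROI-optimal); moreover, every α ∈ (0,1] satisfying α·C′(P(α·v)) = 1 yields a bid α·v that maximizes U over all b ∈ V. -/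
/-- Tangent line inequality for a convex differentiable function. -/
lemma tangent_le {C C' : ℝ → ℝ} (hCconv : ConvexOn ℝ (Set.Ici 0) C)
    (hCderiv : ∀ p : ℝ, 0 ≤ p → HasDerivAt C (C' p) p)
    {p q : ℝ} (hp : 0 ≤ p) (hq : 0 ≤ q) :
    C p - C q ≤ C' p * (p - q) := by
  rcases lt_trichotomy p q with h | h | h
  · have := hCconv.le_slope_of_hasDerivAt hp hq h (hCderiv p hp)
    rw [slope_def_field, le_div_iff₀ (by linarith)] at this
    nlinarith
  · simp [h]
  · have := hCconv.slope_le_of_hasDerivAt hq hp h (hCderiv p hp)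
    rw [slope_def_field, div_le_iff₀ (by linarith)] at this
    nlinarith

/-- For a mechanism truthful for quasi-linear buyers, a buyer with bounded
valuation `v` and a convex, strictly increasing, continuously differentiable cost-of-money
function `C` (with `C 0 = 0` and `C' ≥ 1`), under continuity of the induced value and payment
curves and strict monotonicity of payment in the scaling factor, there exists `α ∈ (0,1]`
such that the uniform scaling bid `α • v` maximizes utility over all bids and
`α · C'(P(α·v)) = 1` (ROI-optimality); moreover every ROI-optimal `α ∈ (0,1]` is
utility-maximizing. -/
theorem stmt1 {X : Type*} [Nonempty X] (V : Set (X → ℝ))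
    (hVpos : ∀ w ∈ V, ∀ x : X, 0 ≤ w x)
    (hVscale : ∀ c : ℝ, 0 ≤ c → ∀ w ∈ V, c • w ∈ V)
    (A : (X → ℝ) → X) (P : (X → ℝ) → ℝ)
    (hPpos : ∀ b ∈ V, 0 ≤ P b)
    (htruthful : ∀ w ∈ V, ∀ b ∈ V, w (A w) - P w ≥ w (A b) - P b)
    (v : X → ℝ) (hv : v ∈ V) (hv1 : ∀ x : X, v x ≤ 1)
    (C C' : ℝ → ℝ)
    (hCconv : ConvexOn ℝ (Set.Ici 0) C)
    (hCmono : StrictMonoOn C (Set.Ici 0))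
    (hCderiv : ∀ p : ℝ, 0 ≤ p → HasDerivAt C (C' p) p)
    (hC'cont : ContinuousOn C' (Set.Ici 0))
    (hC0 : C 0 = 0)
    (hC'1 : ∀ p : ℝ, 0 ≤ p → 1 ≤ C' p)
    (hVcont : ContinuousOn (fun α : ℝ => v (A (α • v))) (Set.Ici 0))
    (hPcont : ContinuousOn (fun α : ℝ => P (α • v)) (Set.Ici 0))
    (hPinc : StrictMonoOn (fun α : ℝ => P (α • v)) (Set.Icc 0 1)) :
    (∃ α ∈ Set.Ioc (0 : ℝ) 1,
      (∀ b ∈ V, v (A (α • v)) - C (P (α • v)) ≥ v (A b) - C (P b)) ∧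
      α * C' (P (α • v)) = 1) ∧
    (∀ α ∈ Set.Ioc (0 : ℝ) 1, α * C' (P (α • v)) = 1 →
      ∀ b ∈ V, v (A (α • v)) - C (P (α • v)) ≥ v (A b) - C (P b)) := by
  -- membership of scaled bids
  have hmem : ∀ α : ℝ, 0 ≤ α → α • v ∈ V := fun α hα => hVscale α hα v hv
  -- Part 2: any ROI-optimal α in (0,1] is utility-maximizing
  have part2 : ∀ α ∈ Set.Ioc (0 : ℝ) 1, α * C' (P (α • v)) = 1 →
      ∀ b ∈ V, v (A (α • v)) - C (P (α • v)) ≥ v (A b) - C (P b) := by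
    intro α hα hroi b hb
    have hα0 : 0 < α := hα.1
    have hαv : α • v ∈ V := hmem α hα0.le
    have hp : 0 ≤ P (α • v) := hPpos _ hαv
    have hq : 0 ≤ P b := hPpos _ hb
    have htr := htruthful (α • v) hαv b hb
    simp only [Pi.smul_apply, smul_eq_mul] at htr
    -- C'(P(αv)) = 1/α
    have hC'eq : C' (P (α • v)) = 1 / α := by
      field_simp at hroi ⊢; linarith
    have htan := tangent_le hCconv hCderiv hp hq
    rw [hC'eq] at htan
    have h3 : (1 / α) * (P (α • v) - P b) ≤ v (A (α • v)) - v (A b) := by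
      rw [one_div, inv_mul_le_iff₀ hα0]
      nlinarith
    nlinarith
  refine ⟨?_, part2⟩
  -- Part 1: existence via IVT applied to g α = α * C' (P (α • v))
  set g : ℝ → ℝ := fun α => α * C' (P (α • v)) with hg
  have hgcont : ContinuousOn g (Set.Icc 0 1) := by
    apply ContinuousOn.mul continuousOn_id
    apply (hC'cont.comp (hPcont.mono Set.Icc_subset_Ici_self))
    intro α hα
    exact hPpos _ (hmem α hα.1)
  have hg0 : g 0 = 0 := by simp [hg]
  have hg1 : 1 ≤ g 1 := by
    have := hC'1 (P ((1:ℝ) • v)) (hPpos _ (hmem 1 zero_le_one))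
    simpa [hg] using this
  have hIVT := intermediate_value_Icc (zero_le_one) hgcont
  have h1mem : (1:ℝ) ∈ Set.Icc (g 0) (g 1) := by
    rw [hg0]; exact ⟨zero_le_one, hg1⟩
  obtain ⟨α, hαmem, hαeq⟩ := hIVT h1mem
  have hαpos : 0 < α := by
    rcases hαmem.1.lt_or_eq with h | h
    · exact h
    · exfalso; rw [← h] at hαeq; rw [hg0] at hαeq; norm_num at hαeq
  exact ⟨α, ⟨hαpos, hαmem.2⟩, part2 α ⟨hαpos, hαmem.2⟩ hαeq, hαeq⟩
end

section
/- Let x = (x_{ij}) be an allocation, (p_j) nonnegative prices, α_i ∈ (0,1] scalars, and P_i = Σ_j p_j·x_{ij}, satisfying the following conditions (which hold at any ROI-optimal pure Nash equilibrium of simultaneous second-price auctions without reserves): (i) Σ_i x_{ij} = 1 for every good j; (ii) C_i(P_i) ≤ v_i(x_i) for every buyer i (equivalently P_i ≤ W_i(x_i)); (iii) α_i·R_i⁺(P_i) ≥ 1 for every buyer i; (iv) α_i·v_{ij} ≤ p_j whenever x_{ij} < 1. Then for every allocation y = (y_{ij}): W(x) ≥ (1/2)·W(y). -/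
open scoped ENNReal

noncomputable section

/-- The right derivative `R⁺` of a convex cost-of-money function `C` with (possibly
infinite) budget `B`, valued in `ℝ≥0∞`: the infimum of slopes to the right within the
domain `[0, B]`.  By convention it is `∞` at `q = B` when `B` is finite (empty infimum). -/
def Rplus (C : ℝ → ℝ) (B : EReal) (q : ℝ) : ℝ≥0∞ :=
  sInf {r : ℝ≥0∞ | ∃ q' : ℝ, (q' : EReal) ≤ B ∧ q < q' ∧
    r = ENNReal.ofReal ((C q' - C q) / (q' - q))}

/-- Buyer's willingness to pay for an outcome of value `t`, given cost-of-money function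
`C` and budget `B`: the largest payment `q ∈ [0, B]` with `C q ≤ t`
(equals `C⁻¹(t)` for `t ≤ C(B)` and `B` otherwise). -/
def willing (C : ℝ → ℝ) (B : EReal) (t : ℝ) : ℝ :=
  sSup {q : ℝ | 0 ≤ q ∧ (q : EReal) ≤ B ∧ C q ≤ t}

/-- Basic properties of `willing`. -/
lemma willing_spec (C : ℝ → ℝ) (B : EReal) (hB : 0 < B)
    (hCcont : ContinuousOn C {q : ℝ | 0 ≤ q ∧ (q : EReal) ≤ B})
    (hC0 : C 0 = 0)
    (hCsub : ∀ q q' : ℝ, 0 ≤ q → q ≤ q' → (q' : EReal) ≤ B →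
      q' - q ≤ C q' - C q)
    (t : ℝ) (ht : 0 ≤ t) :
    0 ≤ willing C B t ∧ (willing C B t : EReal) ≤ B ∧ C (willing C B t) ≤ t ∧
      ∀ q : ℝ, 0 ≤ q → (q : EReal) ≤ B → C q ≤ t → q ≤ willing C B t := by
  set S : Set ℝ := {q : ℝ | 0 ≤ q ∧ (q : EReal) ≤ B ∧ C q ≤ t} with hS
  have h0S : (0 : ℝ) ∈ S := by
    refine ⟨le_refl _, ?_, by rw [hC0]; exact ht⟩
    exact_mod_cast hB.le
  have hbdd : BddAbove S := by
    refine ⟨t, fun q hq => ?_⟩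
    have := hCsub 0 q le_rfl hq.1 hq.2.1
    rw [hC0] at this
    have := hq.2.2
    linarith
  have hDclosed : IsClosed {q : ℝ | 0 ≤ q ∧ (q : EReal) ≤ B} := by
    have : {q : ℝ | 0 ≤ q ∧ (q : EReal) ≤ B} =
        Set.Ici (0 : ℝ) ∩ (fun q : ℝ => (q : EReal)) ⁻¹' Set.Iic B := rfl
    rw [this]
    exact isClosed_Ici.inter (isClosed_Iic.preimage continuous_coe_real_ereal)
  have hSclosed : IsClosed S := by
    have : S = {q : ℝ | 0 ≤ q ∧ (q : EReal) ≤ B} ∩ C ⁻¹' Set.Iic t := by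
      ext q; simp [hS, Set.mem_setOf_eq, and_assoc]
    rw [this]
    exact hCcont.preimage_isClosed_of_isClosed hDclosed isClosed_Iic
  have hmem : sSup S ∈ S := hSclosed.csSup_mem ⟨0, h0S⟩ hbdd
  refine ⟨hmem.1, hmem.2.1, hmem.2.2, fun q h1 h2 h3 => le_csSup hbdd ⟨h1, h2, h3⟩⟩

/-- Key per-buyer lemma: willingness to pay for `y` is at most the equilibrium
willingness to pay plus the price of `y`. -/
lemma willing_key (m : ℕ) (v : Fin m → ℝ) (hv : ∀ j, 0 ≤ v j)
    (B : EReal) (hB : 0 < B) (C : ℝ → ℝ)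
    (hCmono : StrictMonoOn C {q : ℝ | 0 ≤ q ∧ (q : EReal) ≤ B})
    (hCconv : ConvexOn ℝ {q : ℝ | 0 ≤ q ∧ (q : EReal) ≤ B} C)
    (hCcont : ContinuousOn C {q : ℝ | 0 ≤ q ∧ (q : EReal) ≤ B})
    (hC0 : C 0 = 0)
    (hCsub : ∀ q q' : ℝ, 0 ≤ q → q ≤ q' → (q' : EReal) ≤ B →
      q' - q ≤ C q' - C q)
    (x : Fin m → ℝ) (hx01 : ∀ j, x j ∈ Set.Icc (0 : ℝ) 1)
    (p : Fin m → ℝ) (hp : ∀ j, 0 ≤ p j)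
    (α : ℝ) (hα : α ∈ Set.Ioc (0 : ℝ) 1)
    (hpay : (∑ j, p j * x j) ≤ willing C B (∑ j, v j * x j))
    (hROI : 1 ≤ ENNReal.ofReal α * Rplus C B (∑ j, p j * x j))
    (hprice : ∀ j, x j < 1 → α * v j ≤ p j)
    (y : Fin m → ℝ) (hy01 : ∀ j, y j ∈ Set.Icc (0 : ℝ) 1) :
    willing C B (∑ j, v j * y j) ≤ willing C B (∑ j, v j * x j) + ∑ j, p j * y j := by
  set tx := ∑ j, v j * x j with htx_def
  set ty := ∑ j, v j * y j with hty_def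
  set P := ∑ j, p j * x j with hP_def
  set Q := ∑ j, p j * y j with hQ_def
  have htx : 0 ≤ tx := Finset.sum_nonneg fun j _ => mul_nonneg (hv j) (hx01 j).1
  have hty : 0 ≤ ty := Finset.sum_nonneg fun j _ => mul_nonneg (hv j) (hy01 j).1
  have hP0 : 0 ≤ P := Finset.sum_nonneg fun j _ => mul_nonneg (hp j) (hx01 j).1
  have hQ0 : 0 ≤ Q := Finset.sum_nonneg fun j _ => mul_nonneg (hp j) (hy01 j).1
  obtain ⟨hwx0, hwxB, hCwx, hwx_ub⟩ := willing_spec C B hB hCcont hC0 hCsub tx htx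
  obtain ⟨hwy0, hwyB, hCwy, hwy_ub⟩ := willing_spec C B hB hCcont hC0 hCsub ty hty
  set wx := willing C B tx with hwx_def
  set wy := willing C B ty with hwy_def
  rcases le_or_gt wy wx with hle | hlt
  · linarith
  -- Step A : α * ty ≤ α * tx + Q
  have hA : α * ty ≤ α * tx + Q := by
    have hterm : ∀ j : Fin m, α * (v j * y j) ≤ α * (v j * x j) + p j * y j := by
      intro j
      rcases lt_or_eq_of_le (hx01 j).2 with hx1 | hx1
      · have h1 : α * v j ≤ p j := hprice j hx1
        have h2 : α * (v j * y j) ≤ p j * y j := by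
          rw [← mul_assoc]
          exact mul_le_mul_of_nonneg_right h1 (hy01 j).1
        nlinarith [mul_nonneg (mul_nonneg hα.1.le (hv j)) (hx01 j).1]
      · have h2 : α * (v j * y j) ≤ α * (v j * x j) := by
          apply mul_le_mul_of_nonneg_left _ hα.1.le
          exact mul_le_mul_of_nonneg_left (by rw [hx1]; exact (hy01 j).2) (hv j)
        nlinarith [mul_nonneg (hp j) (hy01 j).1]
    calc α * ty = ∑ j, α * (v j * y j) := by rw [hty_def, Finset.mul_sum]
      _ ≤ ∑ j, (α * (v j * x j) + p j * y j) := Finset.sum_le_sum fun j _ => hterm j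
      _ = α * tx + Q := by rw [Finset.sum_add_distrib, htx_def, hQ_def, Finset.mul_sum]
  -- basic domain facts
  have hwyD : wy ∈ {q : ℝ | 0 ≤ q ∧ (q : EReal) ≤ B} := ⟨hwy0, hwyB⟩
  have hwxD : wx ∈ {q : ℝ | 0 ≤ q ∧ (q : EReal) ≤ B} := ⟨hwx0, hwxB⟩
  have hPwx : P ≤ wx := hpay
  have hPwy : P < wy := lt_of_le_of_lt hPwx hlt
  have hPB : (P : EReal) ≤ B := le_trans (by exact_mod_cast hPwx) hwxB
  have hPD : P ∈ {q : ℝ | 0 ≤ q ∧ (q : EReal) ≤ B} := ⟨hP0, hPB⟩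
  -- Step B : C wx = tx
  have hCwx_eq : C wx = tx := by
    by_cases hcase : tx ≤ C wy
    · have hsub_icc : Set.Icc (0 : ℝ) wy ⊆ {q : ℝ | 0 ≤ q ∧ (q : EReal) ≤ B} := by
        intro q hq
        exact ⟨hq.1, le_trans (by exact_mod_cast hq.2) hwyB⟩
      have hivt := intermediate_value_Icc hwy0 (hCcont.mono hsub_icc)
      have htmem : tx ∈ Set.Icc (C 0) (C wy) := ⟨by rw [hC0]; exact htx, hcase⟩
      obtain ⟨q, hqI, hq⟩ := hivt htmem
      have hqD : q ∈ {q : ℝ | 0 ≤ q ∧ (q : EReal) ≤ B} := hsub_icc hqI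
      have hq_le_wx : q ≤ wx := hwx_ub q hqD.1 hqD.2 (le_of_eq hq)
      have : C q ≤ C wx := hCmono.monotoneOn hqD hwxD hq_le_wx
      rw [hq] at this
      exact le_antisymm hCwx this
    · push_neg at hcase
      exact absurd (hwx_ub wy hwy0 hwyB hcase.le) (not_le.mpr hlt)
  -- Step C : wy - P ≤ α * (C wy - C P)
  have hslope_mem : ENNReal.ofReal ((C wy - C P) / (wy - P)) ∈
      {r : ℝ≥0∞ | ∃ q' : ℝ, (q' : EReal) ≤ B ∧ P < q' ∧
        r = ENNReal.ofReal ((C q' - C P) / (q' - P))} := ⟨wy, hwyB, hPwy, rfl⟩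
  have h1 : Rplus C B P ≤ ENNReal.ofReal ((C wy - C P) / (wy - P)) := sInf_le hslope_mem
  have h2 : (1 : ℝ≥0∞) ≤ ENNReal.ofReal α * ENNReal.ofReal ((C wy - C P) / (wy - P)) :=
    le_trans hROI (mul_le_mul_right h1 _)
  rw [← ENNReal.ofReal_mul hα.1.le] at h2
  have h3 : (1 : ℝ) ≤ α * ((C wy - C P) / (wy - P)) := ENNReal.one_le_ofReal.mp h2
  have hpos : (0 : ℝ) < wy - P := by linarith
  have h4 : wy - P ≤ α * (C wy - C P) := by
    have := mul_le_mul_of_nonneg_right h3 hpos.le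
    rw [one_mul, mul_assoc, div_mul_cancel₀ _ hpos.ne'] at this
    exact this
  -- Step D : convexity, C wy - C wx ≥ a * (C wy - C P) with a = (wy - wx)/(wy - P)
  set a := (wy - wx) / (wy - P) with ha_def
  set b := (wx - P) / (wy - P) with hb_def
  have ha : 0 ≤ a := div_nonneg (by linarith) hpos.le
  have hb : 0 ≤ b := div_nonneg (by linarith) hpos.le
  have hab : a + b = 1 := by
    rw [ha_def, hb_def, ← add_div, div_eq_one_iff_eq hpos.ne']
    ring
  have hpoint : a • P + b • wy = wx := by
    simp only [smul_eq_mul, ha_def, hb_def]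
    field_simp
    ring
  have hconv := hCconv.2 hPD hwyD ha hb hab
  rw [hpoint] at hconv
  simp only [smul_eq_mul] at hconv
  have hDa : a * (C wy - C P) ≤ C wy - C wx := by nlinarith
  -- Step E : combine
  have hwywx_eq : wy - wx = a * (wy - P) := by
    rw [ha_def, div_mul_cancel₀ _ hpos.ne']
  have e1 : wy - wx ≤ a * (α * (C wy - C P)) := by
    rw [hwywx_eq]; exact mul_le_mul_of_nonneg_left h4 ha
  have e2 : a * (α * (C wy - C P)) = α * (a * (C wy - C P)) := by ring
  have e3 : α * (a * (C wy - C P)) ≤ α * (C wy - C wx) :=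
    mul_le_mul_of_nonneg_left hDa hα.1.le
  have e4 : α * (C wy - C wx) ≤ α * (ty - tx) :=
    mul_le_mul_of_nonneg_left (by rw [hCwx_eq] at *; linarith) hα.1.le
  linarith

/-- At any ROI-optimal pure Nash equilibrium of simultaneous second-price
auctions without reserves (captured by conditions (i)–(iv)), the transferable welfare of
the equilibrium allocation `x` is at least half the transferable welfare of any
allocation `y`. -/
theorem stmt6 (n m : ℕ) (v : Fin n → Fin m → ℝ) (hv : ∀ i j, 0 ≤ v i j)
    (B : Fin n → EReal) (hB : ∀ i, 0 < B i)
    (C : Fin n → ℝ → ℝ)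
    (hCmono : ∀ i, StrictMonoOn (C i) {q : ℝ | 0 ≤ q ∧ (q : EReal) ≤ B i})
    (hCconv : ∀ i, ConvexOn ℝ {q : ℝ | 0 ≤ q ∧ (q : EReal) ≤ B i} (C i))
    (hCcont : ∀ i, ContinuousOn (C i) {q : ℝ | 0 ≤ q ∧ (q : EReal) ≤ B i})
    (hC0 : ∀ i, C i 0 = 0)
    (hCsub : ∀ i, ∀ q q' : ℝ, 0 ≤ q → q ≤ q' → (q' : EReal) ≤ B i →
      q' - q ≤ C i q' - C i q)
    (x : Fin n → Fin m → ℝ) (hx01 : ∀ i j, x i j ∈ Set.Icc (0 : ℝ) 1)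
    (p : Fin m → ℝ) (hp : ∀ j, 0 ≤ p j)
    (α : Fin n → ℝ) (hα : ∀ i, α i ∈ Set.Ioc (0 : ℝ) 1)
    -- (i) every good is completely sold
    (hsold : ∀ j, ∑ i, x i j = 1)
    -- (ii) each buyer's equilibrium payment is at most her willingness to pay
    (hpay : ∀ i, (∑ j, p j * x i j) ≤ willing (C i) (B i) (∑ j, v i j * x i j))
    -- (iii) ROI-optimality: `α_i · R_i⁺(P_i) ≥ 1`
    (hROI : ∀ i, 1 ≤ ENNReal.ofReal (α i) * Rplus (C i) (B i) (∑ j, p j * x i j))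
    -- (iv) a buyer not receiving all of a good bids at most its price
    (hprice : ∀ i j, x i j < 1 → α i * v i j ≤ p j)
    (y : Fin n → Fin m → ℝ) (hy01 : ∀ i j, y i j ∈ Set.Icc (0 : ℝ) 1)
    (hyfeas : ∀ j, ∑ i, y i j ≤ 1) :
    (1 / 2) * (∑ i, willing (C i) (B i) (∑ j, v i j * y i j)) ≤
      ∑ i, willing (C i) (B i) (∑ j, v i j * x i j) := by
  have hkey : ∀ i, willing (C i) (B i) (∑ j, v i j * y i j) ≤
      willing (C i) (B i) (∑ j, v i j * x i j) + ∑ j, p j * y i j := fun i =>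
    willing_key m (v i) (hv i) (B i) (hB i) (C i) (hCmono i) (hCconv i) (hCcont i)
      (hC0 i) (hCsub i) (x i) (hx01 i) p hp (α i) (hα i) (hpay i) (hROI i)
      (hprice i) (y i) (hy01 i)
  have h1 : (∑ i, willing (C i) (B i) (∑ j, v i j * y i j)) ≤
      (∑ i, willing (C i) (B i) (∑ j, v i j * x i j)) + ∑ i, ∑ j, p j * y i j := by
    rw [← Finset.sum_add_distrib]
    exact Finset.sum_le_sum fun i _ => hkey i
  have hswap : ∀ z : Fin n → Fin m → ℝ,
      (∑ i, ∑ j, p j * z i j) = ∑ j, p j * ∑ i, z i j := by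
    intro z
    rw [Finset.sum_comm]
    simp [Finset.mul_sum]
  have h2 : (∑ i, ∑ j, p j * y i j) ≤ ∑ i, ∑ j, p j * x i j := by
    rw [hswap y, hswap x]
    refine Finset.sum_le_sum fun j _ => ?_
    exact mul_le_mul_of_nonneg_left (by rw [hsold j]; exact hyfeas j) (hp j)
  have h3 : (∑ i, ∑ j, p j * x i j) ≤
      ∑ i, willing (C i) (B i) (∑ j, v i j * x i j) :=
    Finset.sum_le_sum fun i _ => hpay i
  linarith

end
end

section
/- Let x = (x_{ij}) and y = (y_{ij}) be allocations, (p_j) nonnegative prices, α_i ∈ (0,1] scalars, and P_i = Σ_j p_j·x_{ij}. Assume for every buyer i: (ii) C_i(P_i) ≤ v_i(x_i) (equivalently P_i ≤ W_i(x_i)); (iii) α_i·R_i⁺(P_i) ≥ 1; and (iv) α_i·v_{ij} ≤ p_j whenever x_{ij} < 1. Then W(y) − W(x) ≤ Σ_{i,j} p_j·max(y_{ij} − x_{ij}, 0). -/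
open scoped ENNReal

noncomputable section

section Aux

variable {B : EReal} {C : ℝ → ℝ}

lemma willing_mem (hB : (0 : EReal) < B)
    (hcont : ContinuousOn C {q : ℝ | 0 ≤ q ∧ (q : EReal) ≤ B})
    (hC0 : C 0 = 0)
    (hsub : ∀ q q' : ℝ, 0 ≤ q → q ≤ q' → (q' : EReal) ≤ B → q' - q ≤ C q' - C q)
    {t : ℝ} (ht : 0 ≤ t) :
    0 ≤ willing C B t ∧ ((willing C B t : ℝ) : EReal) ≤ B ∧ C (willing C B t) ≤ t := by
  classical
  set S := {q : ℝ | 0 ≤ q ∧ (q : EReal) ≤ B ∧ C q ≤ t} with hSdef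
  have h0S : (0 : ℝ) ∈ S := ⟨le_refl 0, by exact_mod_cast hB.le, by rw [hC0]; exact ht⟩
  have hne : S.Nonempty := ⟨0, h0S⟩
  have hbdd : BddAbove S := by
    refine ⟨t, fun z hz => ?_⟩
    obtain ⟨hz0, hzB, hzC⟩ := hz
    have := hsub 0 z le_rfl hz0 hzB
    rw [hC0] at this
    linarith
  have hq0 : 0 ≤ sSup S := le_csSup hbdd h0S
  have hqB : ((sSup S : ℝ) : EReal) ≤ B := by
    by_cases htop : B = ⊤
    · rw [htop]; exact le_top
    · have hbot : B ≠ ⊥ := fun h => by simp [h] at hB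
      have hcoe : ((B.toReal : ℝ) : EReal) = B := EReal.coe_toReal htop hbot
      have : sSup S ≤ B.toReal := by
        refine csSup_le hne fun z hz => ?_
        have := hz.2.1
        rw [← hcoe] at this
        exact_mod_cast this
      rw [← hcoe]
      exact_mod_cast this
  have hclos : sSup S ∈ closure S := csSup_mem_closure hne hbdd
  have hcwa : ContinuousWithinAt C S (sSup S) :=
    (hcont (sSup S) ⟨hq0, hqB⟩).mono fun z hz => ⟨hz.1, hz.2.1⟩
  haveI := mem_closure_iff_nhdsWithin_neBot.mp hclos
  have hqC : C (sSup S) ≤ t :=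
    le_of_tendsto hcwa (eventually_mem_nhdsWithin.mono fun z hz => hz.2.2)
  exact ⟨hq0, hqB, hqC⟩

lemma willing_eq (hB : (0 : EReal) < B)
    (hcont : ContinuousOn C {q : ℝ | 0 ≤ q ∧ (q : EReal) ≤ B})
    (hC0 : C 0 = 0)
    (hsub : ∀ q q' : ℝ, 0 ≤ q → q ≤ q' → (q' : EReal) ≤ B → q' - q ≤ C q' - C q)
    {t : ℝ} (ht : 0 ≤ t) (hlt : ((willing C B t : ℝ) : EReal) < B) :
    C (willing C B t) = t := by
  obtain ⟨hq0, hqB, hqC⟩ := willing_mem hB hcont hC0 hsub ht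
  by_contra hne
  have hCq : C (willing C B t) < t := lt_of_le_of_ne hqC hne
  set q := willing C B t with hqdef
  obtain ⟨b, hqb, hbB⟩ : ∃ b : ℝ, q < b ∧ ((b : ℝ) : EReal) ≤ B := by
    by_cases htop : B = ⊤
    · exact ⟨q + 1, lt_add_one q, by rw [htop]; exact le_top⟩
    · have hbot : B ≠ ⊥ := fun h => by simp [h] at hB
      have hcoe : ((B.toReal : ℝ) : EReal) = B := EReal.coe_toReal htop hbot
      refine ⟨B.toReal, ?_, hcoe.le⟩
      rw [← hcoe] at hlt
      exact_mod_cast hlt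
  have hsubset : Set.Ioc q b ⊆ {z : ℝ | 0 ≤ z ∧ (z : EReal) ≤ B} := fun z hz =>
    ⟨hq0.trans hz.1.le, le_trans (by exact_mod_cast hz.2) hbB⟩
  have hcwa : ContinuousWithinAt C (Set.Ioc q b) q :=
    (hcont q ⟨hq0, hqB⟩).mono hsubset
  haveI : (nhdsWithin q (Set.Ioc q b)).NeBot := left_nhdsWithin_Ioc_neBot hqb
  have hev : ∀ᶠ z in nhdsWithin q (Set.Ioc q b), C z < t :=
    hcwa (Iio_mem_nhds hCq)
  obtain ⟨z, hzmem, hzlt⟩ := (eventually_mem_nhdsWithin.and hev).exists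
  have hzS : z ∈ {q : ℝ | 0 ≤ q ∧ (q : EReal) ≤ B ∧ C q ≤ t} :=
    ⟨(hsubset hzmem).1, (hsubset hzmem).2, hzlt.le⟩
  have : z ≤ q := by
    have hbdd : BddAbove {q : ℝ | 0 ≤ q ∧ (q : EReal) ≤ B ∧ C q ≤ t} := by
      refine ⟨t, fun w hw => ?_⟩
      obtain ⟨hw0, hwB, hwC⟩ := hw
      have := hsub 0 w le_rfl hw0 hwB
      rw [hC0] at this; linarith
    exact le_csSup hbdd hzS
  exact absurd hzmem.1 (not_lt.mpr this)

lemma slope_ge {α P b : ℝ} (hα0 : 0 ≤ α) (hPb : P < b) (hbB : ((b : ℝ) : EReal) ≤ B)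
    (hROI : 1 ≤ ENNReal.ofReal α * Rplus C B P) :
    1 ≤ α * ((C b - C P) / (b - P)) := by
  have hmem : ENNReal.ofReal ((C b - C P) / (b - P)) ∈
      {r : ℝ≥0∞ | ∃ q' : ℝ, (q' : EReal) ≤ B ∧ P < q' ∧
        r = ENNReal.ofReal ((C q' - C P) / (q' - P))} := ⟨b, hbB, hPb, rfl⟩
  have h1 : Rplus C B P ≤ ENNReal.ofReal ((C b - C P) / (b - P)) := sInf_le hmem
  have h2 : (1 : ℝ≥0∞) ≤ ENNReal.ofReal α * ENNReal.ofReal ((C b - C P) / (b - P)) :=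
    le_trans hROI (mul_le_mul_right h1 _)
  rw [← ENNReal.ofReal_mul hα0] at h2
  exact ENNReal.one_le_ofReal.mp h2

lemma key (hB : (0 : EReal) < B)
    (hconv : ConvexOn ℝ {q : ℝ | 0 ≤ q ∧ (q : EReal) ≤ B} C)
    (hcont : ContinuousOn C {q : ℝ | 0 ≤ q ∧ (q : EReal) ≤ B})
    (hC0 : C 0 = 0)
    (hsub : ∀ q q' : ℝ, 0 ≤ q → q ≤ q' → (q' : EReal) ≤ B → q' - q ≤ C q' - C q)
    {α P tx ty Δ : ℝ} (hα : α ∈ Set.Ioc (0 : ℝ) 1)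
    (hP0 : 0 ≤ P) (htx : 0 ≤ tx) (hty : 0 ≤ ty) (hΔ : 0 ≤ Δ)
    (hpay : P ≤ willing C B tx)
    (hROI : 1 ≤ ENNReal.ofReal α * Rplus C B P)
    (hty_le : ty ≤ tx + Δ / α) :
    willing C B ty - willing C B tx ≤ Δ := by
  obtain ⟨hq0, hqB, hqC⟩ := willing_mem hB hcont hC0 hsub htx
  obtain ⟨hq'0, hq'B, hq'C⟩ := willing_mem hB hcont hC0 hsub hty
  set q := willing C B tx with hq
  set q' := willing C B ty with hq'
  rcases le_or_gt q' q with h | h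
  · linarith
  · have hqltB : ((q : ℝ) : EReal) < B :=
      lt_of_lt_of_le (by exact_mod_cast h) hq'B
    have hCq : C q = tx := willing_eq hB hcont hC0 hsub htx hqltB
    have hPq' : P < q' := lt_of_le_of_lt hpay h
    have hslope : 1 ≤ α * ((C q' - C P) / (q' - P)) := slope_ge hα.1.le hPq' hq'B hROI
    have hPmem : P ∈ {z : ℝ | 0 ≤ z ∧ (z : EReal) ≤ B} :=
      ⟨hP0, le_trans (by exact_mod_cast hpay) hqB⟩
    have hsec := hconv.secant_mono ⟨hq'0, hq'B⟩ hPmem ⟨hq0, hqB⟩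
      (ne_of_lt hPq') (ne_of_lt h) hpay
    have e1 : (C P - C q') / (P - q') = (C q' - C P) / (q' - P) := by
      rw [← neg_div_neg_eq]; congr 1 <;> ring
    have e2 : (C q - C q') / (q - q') = (C q' - C q) / (q' - q) := by
      rw [← neg_div_neg_eq]; congr 1 <;> ring
    rw [e1, e2] at hsec
    have hslope2 : 1 ≤ α * ((C q' - C q) / (q' - q)) :=
      le_trans hslope (mul_le_mul_of_nonneg_left hsec hα.1.le)
    have hd : 0 < q' - q := by linarith
    have h3 : q' - q ≤ α * (C q' - C q) := by
      rw [mul_div_assoc'] at hslope2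
      have := (one_le_div hd).mp hslope2
      linarith
    have h4 : C q' - C q ≤ Δ / α := by
      rw [hCq]; linarith
    calc q' - q ≤ α * (C q' - C q) := h3
      _ ≤ α * (Δ / α) := mul_le_mul_of_nonneg_left h4 hα.1.le
      _ = Δ := by field_simp; exact (mul_div_cancel_left₀ Δ (ne_of_gt hα.1))

end Aux

/-- Under conditions (ii)–(iv) (which hold at an ROI-optimal pure Nash
equilibrium of simultaneous second-price auctions without reserves), for any two
allocations `x` and `y`, `W(y) − W(x) ≤ Σ_{i,j} p_j · max(y_{ij} − x_{ij}, 0)`. -/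
theorem stmt8 (n m : ℕ) (v : Fin n → Fin m → ℝ) (hv : ∀ i j, 0 ≤ v i j)
    (B : Fin n → EReal) (hB : ∀ i, 0 < B i)
    (C : Fin n → ℝ → ℝ)
    (hCmono : ∀ i, StrictMonoOn (C i) {q : ℝ | 0 ≤ q ∧ (q : EReal) ≤ B i})
    (hCconv : ∀ i, ConvexOn ℝ {q : ℝ | 0 ≤ q ∧ (q : EReal) ≤ B i} (C i))
    (hCcont : ∀ i, ContinuousOn (C i) {q : ℝ | 0 ≤ q ∧ (q : EReal) ≤ B i})
    (hC0 : ∀ i, C i 0 = 0)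
    (hCsub : ∀ i, ∀ q q' : ℝ, 0 ≤ q → q ≤ q' → (q' : EReal) ≤ B i →
      q' - q ≤ C i q' - C i q)
    (x : Fin n → Fin m → ℝ) (hx01 : ∀ i j, x i j ∈ Set.Icc (0 : ℝ) 1)
    (hxfeas : ∀ j, ∑ i, x i j ≤ 1)
    (p : Fin m → ℝ) (hp : ∀ j, 0 ≤ p j)
    (α : Fin n → ℝ) (hα : ∀ i, α i ∈ Set.Ioc (0 : ℝ) 1)
    -- (ii) each buyer's payment is at most her willingness to pay
    (hpay : ∀ i, (∑ j, p j * x i j) ≤ willing (C i) (B i) (∑ j, v i j * x i j))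
    -- (iii) ROI-optimality: `α_i · R_i⁺(P_i) ≥ 1`
    (hROI : ∀ i, 1 ≤ ENNReal.ofReal (α i) * Rplus (C i) (B i) (∑ j, p j * x i j))
    -- (iv) a buyer not receiving all of a good bids at most its price
    (hprice : ∀ i j, x i j < 1 → α i * v i j ≤ p j)
    (y : Fin n → Fin m → ℝ) (hy01 : ∀ i j, y i j ∈ Set.Icc (0 : ℝ) 1)
    (hyfeas : ∀ j, ∑ i, y i j ≤ 1) :
    (∑ i, willing (C i) (B i) (∑ j, v i j * y i j)) -
        (∑ i, willing (C i) (B i) (∑ j, v i j * x i j)) ≤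
      ∑ i, ∑ j, p j * max (y i j - x i j) 0 := by
  have hkey : ∀ i, willing (C i) (B i) (∑ j, v i j * y i j) -
      willing (C i) (B i) (∑ j, v i j * x i j) ≤ ∑ j, p j * max (y i j - x i j) 0 := by
    intro i
    have hΔ0 : 0 ≤ ∑ j, p j * max (y i j - x i j) 0 :=
      Finset.sum_nonneg fun j _ => mul_nonneg (hp j) (le_max_right _ _)
    refine key (hB i) (hCconv i) (hCcont i) (hC0 i) (hCsub i) (hα i)
      (Finset.sum_nonneg fun j _ => mul_nonneg (hp j) (hx01 i j).1)
      (Finset.sum_nonneg fun j _ => mul_nonneg (hv i j) (hx01 i j).1)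
      (Finset.sum_nonneg fun j _ => mul_nonneg (hv i j) (hy01 i j).1)
      hΔ0 (hpay i) (hROI i) ?_
    have hterm : ∀ j, α i * (v i j * y i j - v i j * x i j) ≤ p j * max (y i j - x i j) 0 := by
      intro j
      rcases lt_or_ge (x i j) 1 with hx1 | hx1
      · have h1 := hprice i j hx1
        have h2 : y i j - x i j ≤ max (y i j - x i j) 0 := le_max_left _ _
        have h3 : 0 ≤ max (y i j - x i j) 0 := le_max_right _ _
        have h4 : 0 ≤ α i * v i j := mul_nonneg (hα i).1.le (hv i j)
        nlinarith
      · have hxeq : x i j = 1 := le_antisymm (hx01 i j).2 hx1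
        have hyx : y i j - x i j ≤ 0 := by have := (hy01 i j).2; linarith
        rw [max_eq_right hyx, mul_zero]
        have h4 : 0 ≤ α i * v i j := mul_nonneg (hα i).1.le (hv i j)
        nlinarith
    have hsum : α i * ((∑ j, v i j * y i j) - ∑ j, v i j * x i j) ≤
        ∑ j, p j * max (y i j - x i j) 0 := by
      rw [← Finset.sum_sub_distrib, Finset.mul_sum]
      exact Finset.sum_le_sum fun j _ => hterm j
    rw [← sub_le_iff_le_add', le_div_iff₀ (hα i).1, mul_comm]
    exact hsum
  rw [← Finset.sum_sub_distrib]
  exact Finset.sum_le_sum fun i _ => hkey i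
end
end

section
/- Fix ε ∈ (0,1]. Consider n = 2 buyers and m = 2 goods with per-unit values v_{11} = 1, v_{12} = 0, v_{21} = 1 + ε, v_{22} = 1, budgets B_1 = B_2 = 1, and C_i(p) = p on [0,1] for both buyers. Let x be the allocation with x_{21} = x_{22} = 1 and x_{11} = x_{12} = 0, let the prices be p_1 = 1, p_2 = 0, let α_1 = α_2 = 1, and set P_i = Σ_j p_j·x_{ij}. Then: (i) Σ_i x_{ij} = 1 for each good j; (ii) C_i(P_i) ≤ v_i(x_i) for each i; (iii) α_i·R_i⁺(P_i) ≥ 1 for each i; (iv) α_i·v_{ij} ≤ p_j whenever x_{ij} < 1; the transferable welfare satisfies W(x) = 1; the allocation y with y_{11} = y_{22} = 1 (and other entries 0) satisfies W(y) = 2; and every allocation y′ satisfies W(y′) ≤ 2. Hence the factor 1/2 in the transferable-welfare guarantee for ROI-optimal equilibria of simultaneous second-price auctions is tight. -/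
open scoped ENNReal

noncomputable section

lemma willing_id (t : ℝ) (ht : 0 ≤ t) :
    willing (fun q => q) (1 : EReal) t = min t 1 := by
  have hset : {q : ℝ | 0 ≤ q ∧ (q : EReal) ≤ (1 : EReal) ∧ (fun q => q) q ≤ t}
      = Set.Icc 0 (min t 1) := by
    ext q
    simp only [Set.mem_setOf_eq, Set.mem_Icc, le_min_iff]
    constructor
    · rintro ⟨h0, h1, h2⟩
      exact ⟨h0, h2, by exact_mod_cast h1⟩
    · rintro ⟨h0, h2, h1⟩
      exact ⟨h0, by exact_mod_cast h1, h2⟩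
  unfold willing
  rw [hset, csSup_Icc (le_min ht zero_le_one)]

lemma Rplus_id_zero : Rplus (fun q => q) (1 : EReal) 0 = 1 := by
  unfold Rplus
  have hset : {r : ℝ≥0∞ | ∃ q' : ℝ, (q' : EReal) ≤ (1 : EReal) ∧ 0 < q' ∧
      r = ENNReal.ofReal (((fun q => q) q' - (fun q => q) 0) / (q' - 0))} = {1} := by
    ext r
    simp only [Set.mem_setOf_eq, Set.mem_singleton_iff]
    constructor
    · rintro ⟨q', h1, h2, rfl⟩
      simp only [sub_zero]
      rw [div_self h2.ne', ENNReal.ofReal_one]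
    · rintro rfl
      exact ⟨1, le_refl _, one_pos, by norm_num⟩
  rw [hset, sInf_singleton]

lemma Rplus_id_one : Rplus (fun q => q) (1 : EReal) 1 = ⊤ := by
  unfold Rplus
  have hset : {r : ℝ≥0∞ | ∃ q' : ℝ, (q' : EReal) ≤ (1 : EReal) ∧ 1 < q' ∧
      r = ENNReal.ofReal (((fun q => q) q' - (fun q => q) 1) / (q' - 1))} = ∅ := by
    ext r
    simp only [Set.mem_setOf_eq, Set.mem_empty_iff_false, iff_false]
    rintro ⟨q', h1, h2, _⟩
    have : q' ≤ 1 := by exact_mod_cast h1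
    linarith
  rw [hset, sInf_empty]

/-- Tightness of the factor `1/2` in the transferable-welfare guarantee.
With values `v₁₁ = 1, v₁₂ = 0, v₂₁ = 1+ε, v₂₂ = 1`, unit budgets, quasi-linear costs,
the allocation giving everything to buyer 2 at prices `(1, 0)` with scalars `α = (1,1)`
satisfies the ROI-optimal-equilibrium conditions (i)–(iv), has transferable welfare `1`,
while the allocation `y` (buyer `i` gets good `i`) has transferable welfare `2`, and no
allocation has transferable welfare exceeding `2`. -/
theorem stmt9 (ε : ℝ) (hε : ε ∈ Set.Ioc (0 : ℝ) 1) :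
    let v : Fin 2 → Fin 2 → ℝ := ![![1, 0], ![1 + ε, 1]]
    let B : Fin 2 → EReal := fun _ => (1 : EReal)
    let C : Fin 2 → ℝ → ℝ := fun _ q => q
    let x : Fin 2 → Fin 2 → ℝ := ![![0, 0], ![1, 1]]
    let p : Fin 2 → ℝ := ![1, 0]
    let α : Fin 2 → ℝ := fun _ => 1
    let P : Fin 2 → ℝ := fun i => ∑ j, p j * x i j
    let y : Fin 2 → Fin 2 → ℝ := ![![1, 0], ![0, 1]]
    -- (i) every good is completely sold
    (∀ j, ∑ i, x i j = 1) ∧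
    -- (ii)
    (∀ i, C i (P i) ≤ ∑ j, v i j * x i j) ∧
    -- (iii)
    (∀ i, 1 ≤ ENNReal.ofReal (α i) * Rplus (C i) (B i) (P i)) ∧
    -- (iv)
    (∀ i j, x i j < 1 → α i * v i j ≤ p j) ∧
    -- transferable welfare of the equilibrium allocation is 1
    (∑ i, willing (C i) (B i) (∑ j, v i j * x i j)) = 1 ∧
    -- transferable welfare of y is 2
    (∑ i, willing (C i) (B i) (∑ j, v i j * y i j)) = 2 ∧
    -- no allocation has transferable welfare exceeding 2
    (∀ y' : Fin 2 → Fin 2 → ℝ, (∀ i j, y' i j ∈ Set.Icc (0 : ℝ) 1) →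
      (∀ j, ∑ i, y' i j ≤ 1) →
      (∑ i, willing (C i) (B i) (∑ j, v i j * y' i j)) ≤ 2) := by
  obtain ⟨hε0, hε1⟩ := hε
  intro v B C x p α P y
  have hP0 : P 0 = 0 := by simp [P, p, x, Fin.sum_univ_two]
  have hP1 : P 1 = 1 := by simp [P, p, x, Fin.sum_univ_two]
  refine ⟨?_, ?_, ?_, ?_, ?_, ?_, ?_⟩
  · intro j
    fin_cases j <;> simp [x, Fin.sum_univ_two]
  · rw [Fin.forall_fin_two]
    constructor
    · simp [C, hP0, v, x, Fin.sum_univ_two]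
    · simp only [C]
      rw [hP1]
      simp [v, x, Fin.sum_univ_two]
      linarith
  · rw [Fin.forall_fin_two]
    constructor
    · simp only [α, C, B]
      rw [hP0, Rplus_id_zero]
      simp
    · simp only [α, C, B]
      rw [hP1, Rplus_id_one]
      simp
  · intro i j hij
    fin_cases i <;> fin_cases j <;> simp_all [x, v, α, p]
  · rw [Fin.sum_univ_two]
    have h0 : (∑ j, v 0 j * x 0 j) = 0 := by simp [v, x, Fin.sum_univ_two]
    have h1 : (∑ j, v 1 j * x 1 j) = 2 + ε := by
      simp [v, x, Fin.sum_univ_two]; ring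
    rw [h0, h1]
    simp only [C, B]
    rw [willing_id 0 le_rfl, willing_id (2 + ε) (by linarith)]
    rw [min_eq_left zero_le_one, min_eq_right (by linarith : (1:ℝ) ≤ 2 + ε)]
    ring
  · rw [Fin.sum_univ_two]
    have h0 : (∑ j, v 0 j * y 0 j) = 1 := by simp [v, y, Fin.sum_univ_two]
    have h1 : (∑ j, v 1 j * y 1 j) = 1 := by simp [v, y, Fin.sum_univ_two]
    rw [h0, h1]
    simp only [C, B]
    rw [willing_id 1 zero_le_one, min_self]
    norm_num
  · intro y' hy' _
    rw [Fin.sum_univ_two]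
    have hv0 : 0 ≤ ∑ j, v 0 j * y' 0 j := by
      have := (hy' 0 0).1; have := (hy' 0 1).1
      simp [v, Fin.sum_univ_two]
      linarith
    have hv1 : 0 ≤ ∑ j, v 1 j * y' 1 j := by
      have := (hy' 1 0).1; have := (hy' 1 1).1
      simp [v, Fin.sum_univ_two]
      nlinarith
    simp only [C, B]
    rw [willing_id _ hv0, willing_id _ hv1]
    have := min_le_right (∑ j, v 0 j * y' 0 j) 1
    have := min_le_right (∑ j, v 1 j * y' 1 j) 1
    linarith
end
end

section
/- Fix ε ∈ (0,1]. Consider n = 2 buyers and m = 2 goods with per-unit values v_{11} = 1, v_{12} = 0, v_{21} = 1 + ε, v_{22} = 1, budgets B_1 = B_2 = 1, and C_i(p) = p on [0,1] for both buyers. Let the reserves be r_1 = r_2 = 1, the prices p_1 = p_2 = 1, the allocation x with x_{21} = 1 and all other entries 0, the scalars α_1 = α_2 = 1, and P_i = Σ_j p_j·x_{ij}. Then: (i) if Σ_i x_{ij} < 1 then p_j = r_j; (ii) if x_{ij} < 1 then α_i·v_{ij} ≤ p_j; (iii) α_i·R_i⁺(P_i) ≥ 1 and P_i ≤ B_i for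 each i; the allocation y with y_{11} = y_{22} = 1 (other entries 0) satisfies Q_i = Σ_j r_j·y_{ij} ≤ B_i and r_j·R_i⁻(Q_i) ≤ v_{ij} whenever y_{ij} > 0; and the revenue satisfies Σ_i P_i = 1 = (1/2)·Σ_{i,j} r_j·y_{ij}. Hence the factor 1/2 in the revenue guarantee for ROI-optimal equilibria with reserves is tight. -/
open scoped ENNReal

noncomputable section

/-- The left derivative `R⁻` of a convex cost-of-money function `C`, valued in `ℝ≥0∞`:
the supremum of slopes to the left, with the convention `R⁻(0) = 1`. -/
def Rminus (C : ℝ → ℝ) (q : ℝ) : ℝ≥0∞ :=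
  if q ≤ 0 then 1 else
    sSup {r : ℝ≥0∞ | ∃ q' : ℝ, 0 ≤ q' ∧ q' < q ∧
      r = ENNReal.ofReal ((C q - C q') / (q - q'))}

lemma rplus_id0 : Rplus (fun q => q) 1 0 = 1 := by
  unfold Rplus
  have : {r : ℝ≥0∞ | ∃ q' : ℝ, (q' : EReal) ≤ 1 ∧ (0:ℝ) < q' ∧
      r = ENNReal.ofReal ((q' - 0) / (q' - 0))} = {1} := by
    ext r
    simp only [Set.mem_setOf_eq, Set.mem_singleton_iff]
    constructor
    · rintro ⟨q', hq1, hq2, rfl⟩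
      rw [sub_zero, div_self (ne_of_gt hq2)]
      simp
    · rintro rfl
      exact ⟨1, le_refl _, one_pos, by norm_num⟩
  rw [this, csInf_singleton]

lemma rplus_id1 : Rplus (fun q => q) 1 1 = ⊤ := by
  unfold Rplus
  refine (congrArg sInf (?_ : _ = (∅ : Set ℝ≥0∞))).trans sInf_empty
  ext r
  simp only [Set.mem_setOf_eq, Set.mem_empty_iff_false, iff_false]
  rintro ⟨q', hq1, hq2, _⟩
  have : (q' : EReal) ≤ ((1:ℝ) : EReal) := by exact_mod_cast hq1
  rw [EReal.coe_le_coe_iff] at this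
  linarith

lemma rminus_id1 : Rminus (fun q => q) 1 = 1 := by
  unfold Rminus
  rw [if_neg (by norm_num)]
  have : {r : ℝ≥0∞ | ∃ q' : ℝ, 0 ≤ q' ∧ q' < 1 ∧
      r = ENNReal.ofReal ((1 - q') / (1 - q'))} = {1} := by
    ext r
    simp only [Set.mem_setOf_eq, Set.mem_singleton_iff]
    constructor
    · rintro ⟨q', hq1, hq2, rfl⟩
      rw [div_self (by linarith)]
      simp
    · rintro rfl
      exact ⟨0, le_refl _, one_pos, by norm_num⟩
  rw [this, csSup_singleton]

/-- Tightness of the factor `1/2` in the revenue guarantee.  With values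
`v₁₁ = 1, v₁₂ = 0, v₂₁ = 1+ε, v₂₂ = 1`, unit budgets, quasi-linear costs, reserves
`r = (1,1)`, prices `p = (1,1)`, equilibrium allocation `x` giving only good 1 to buyer 2,
and scalars `α = (1,1)`: conditions (i)–(iii) hold, the sequential posted-price allocation
`y` (buyer `i` buys good `i`) satisfies its conditions, and the equilibrium revenue is `1`,
exactly half the posted-price revenue `2`. -/
theorem stmt11 (ε : ℝ) (hε : ε ∈ Set.Ioc (0 : ℝ) 1) :
    let v : Fin 2 → Fin 2 → ℝ := ![![1, 0], ![1 + ε, 1]]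
    let B : Fin 2 → EReal := fun _ => (1 : EReal)
    let C : Fin 2 → ℝ → ℝ := fun _ q => q
    let r : Fin 2 → ℝ := ![1, 1]
    let p : Fin 2 → ℝ := ![1, 1]
    let x : Fin 2 → Fin 2 → ℝ := ![![0, 0], ![1, 0]]
    let α : Fin 2 → ℝ := fun _ => 1
    let P : Fin 2 → ℝ := fun i => ∑ j, p j * x i j
    let y : Fin 2 → Fin 2 → ℝ := ![![1, 0], ![0, 1]]
    let Q : Fin 2 → ℝ := fun i => ∑ j, r j * y i j
    -- (i) an unsold good is priced at its reserve
    (∀ j, (∑ i, x i j) < 1 → p j = r j) ∧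
    -- (ii) a buyer not receiving all of a good bids at most its price
    (∀ i j, x i j < 1 → α i * v i j ≤ p j) ∧
    -- (iii) ROI-optimality and budget feasibility
    (∀ i, 1 ≤ ENNReal.ofReal (α i) * Rplus (C i) (B i) (P i)) ∧
    (∀ i, (P i : EReal) ≤ B i) ∧
    -- posted-price allocation `y` is budget-feasible and purchase-rational
    (∀ i, (Q i : EReal) ≤ B i) ∧
    (∀ i j, 0 < y i j →
      ENNReal.ofReal (r j) * Rminus (C i) (Q i) ≤ ENNReal.ofReal (v i j)) ∧
    -- revenue comparison: equilibrium revenue 1 is half of posted-price revenue 2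
    (∑ i, P i) = 1 ∧ (∑ i, ∑ j, r j * y i j) = 2 := by
  obtain ⟨hε0, hε1⟩ := hε
  intro v B C r p x α P y Q
  have hP0 : P 0 = 0 := by simp [P, Fin.sum_univ_two, p, x]
  have hP1 : P 1 = 1 := by simp [P, Fin.sum_univ_two, p, x]
  have hQ0 : Q 0 = 1 := by simp [Q, Fin.sum_univ_two, r, y]
  have hQ1 : Q 1 = 1 := by simp [Q, Fin.sum_univ_two, r, y]
  refine ⟨?_, ?_, ?_, ?_, ?_, ?_, ?_, ?_⟩
  · intro j hj
    fin_cases j <;> simp [p, r]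
  · intro i j hij
    fin_cases i <;> fin_cases j <;>
      simp_all [α, v, p, x] <;> linarith
  · intro i
    fin_cases i
    · show 1 ≤ ENNReal.ofReal (α 0) * Rplus (C 0) (B 0) (P 0)
      rw [hP0, show (B 0) = (1:EReal) from rfl, show C 0 = (fun q : ℝ => q) from rfl,
        rplus_id0]
      simp [α]
    · show 1 ≤ ENNReal.ofReal (α 1) * Rplus (C 1) (B 1) (P 1)
      rw [hP1, show (B 1) = (1:EReal) from rfl, show C 1 = (fun q : ℝ => q) from rfl,
        rplus_id1]
      simp [α]
  · intro i
    fin_cases i <;> simp [hP0, hP1, B] <;> norm_cast <;> norm_num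
  · intro i
    fin_cases i <;> simp [hQ0, hQ1, B]
  · intro i j hij
    fin_cases i <;> fin_cases j <;> simp_all [y, r, v] <;>
      · show Rminus (fun q : ℝ => q) 1 ≤ 1
        rw [rminus_id1]
  · simp [Fin.sum_univ_two, hP0, hP1]
  · simp [Fin.sum_univ_two, r, y]; norm_num
end
end

section
/- Fix δ ∈ (0, 1/2). In the single-item second-price auction with tie-breaking in favor of buyer 1, where buyer 1 has value 1 for the item and is quasi-linear up to a hard budget of δ (C_1(p) = p for p ≤ δ, and payments above δ are infeasible), and buyer 2 has value 1/2 and is quasi-linear (C_2(p) = p for all p ≥ 0), the bid profile (b_1, b_2) = (1, 0) is a pure Nash equilibrium: no buyer can strictly increase her utility by any unilateral change of bid. The transferable welfare of the resulting allocation (buyer 1 wins the item) equals δ, while the allocation giving the entire item to buyer 2 has transferable welfare 1/2. Hence a pure Nash equilibrium that is not ROI-optimal can have transferable welfare an arbitrarily small fraction of the optimal transferable welfare. -/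
noncomputable section

/-- Utility of buyer 1 (value `1`, quasi-linear up to a hard budget `δ`) in the
second-price auction with ties broken in her favor: she wins and pays `b₂` when
`b₂ ≤ b₁`, infeasible (utility `−∞`) if the payment exceeds the budget. -/
def U1 (δ : ℝ) (b1 b2 : ℝ) : EReal :=
  if b2 ≤ b1 then (if b2 ≤ δ then ((1 - b2 : ℝ) : EReal) else ⊥) else 0

/-- Utility of buyer 2 (value `1/2`, quasi-linear, no budget): she wins and pays `b₁`
exactly when `b₁ < b₂`. -/
def U2 (b1 b2 : ℝ) : EReal :=
  if b1 < b2 then ((1 / 2 - b1 : ℝ) : EReal) else 0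

lemma willing_id_real (B t : ℝ) (hB : 0 ≤ B) (ht : 0 ≤ t) :
    willing (fun q => q) (B : EReal) t = min B t := by
  have hset : {q : ℝ | 0 ≤ q ∧ (q : EReal) ≤ (B : EReal) ∧ q ≤ t}
      = Set.Icc 0 (min B t) := by
    ext q
    simp [Set.mem_Icc, EReal.coe_le_coe_iff, le_min_iff, and_assoc]
  rw [willing, hset, csSup_Icc (le_min hB ht)]

lemma willing_id_top (t : ℝ) (ht : 0 ≤ t) :
    willing (fun q => q) ⊤ t = t := by
  have hset : {q : ℝ | 0 ≤ q ∧ (q : EReal) ≤ ⊤ ∧ q ≤ t} = Set.Icc 0 t := by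
    ext q; simp [Set.mem_Icc]
  rw [willing, hset, csSup_Icc ht]

/-- in the single-item second-price auction with tie-breaking in favor of
buyer 1, where buyer 1 has value 1 and a hard budget `δ ∈ (0, 1/2)` and buyer 2 has value
`1/2` and is quasi-linear, the bid profile `(1, 0)` is a pure Nash equilibrium; the
transferable welfare of the resulting allocation (buyer 1 wins) equals `δ`, while
allocating the item to buyer 2 gives transferable welfare `1/2`. -/
theorem stmt16 (δ : ℝ) (hδ : δ ∈ Set.Ioo (0 : ℝ) (1 / 2)) :
    (∀ b1' : ℝ, 0 ≤ b1' → U1 δ b1' 0 ≤ U1 δ 1 0) ∧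
    (∀ b2' : ℝ, 0 ≤ b2' → U2 1 b2' ≤ U2 1 0) ∧
    willing (fun q => q) (δ : EReal) 1 + willing (fun q => q) ⊤ 0 = δ ∧
    willing (fun q => q) (δ : EReal) 0 + willing (fun q => q) ⊤ (1 / 2) = 1 / 2 := by
  obtain ⟨h0, h12⟩ := hδ
  refine ⟨?_, ?_, ?_, ?_⟩
  · intro b1' hb
    simp [U1, hb, h0.le]
  · intro b2' _
    have h0' : U2 1 0 = 0 := by simp [U2]
    rw [h0', U2]
    split_ifs with h
    · have : ((1 / 2 - 1 : ℝ) : EReal) ≤ ((0 : ℝ) : EReal) := by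
        exact_mod_cast (by norm_num : (1 / 2 - 1 : ℝ) ≤ 0)
      simpa using this
    · exact le_rfl
  · rw [willing_id_real δ 1 h0.le zero_le_one, willing_id_top 0 le_rfl,
      min_eq_left (by linarith), add_zero]
  · rw [willing_id_real δ 0 h0.le le_rfl, willing_id_top (1/2) (by norm_num),
      min_eq_right h0.le, zero_add]
end
end
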